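/- arXiv:2202.10325 — 2 statements merged into one kernel-verified Lean document; each statement's English description precedes it below -/
import Mathlib

section
/- Let Ω ⊆ ℝ^d be convex, fix a norm ‖·‖ on ℝ^d, and suppose Ω = Ω₁ ∪ Ω₂ with Ω₁ ∩ Ω₂ = ∅. Let f : Ω → ℝ be k₁-Lipschitz on Ω₁ and k₂-Lipschitz on Ω₂. Let D ≥ 0 be a bound on the jump across the interface, in the sense that: (i) for every z ∈ Ω₂ ∩ closure(Ω₁), limsup_{w → z, w ∈ Ω₁} |f(w) − f(z)| ≤ D, and (ii) for every z ∈ Ω₁ ∩ closure(Ω₂), limsup_{w → z, w ∈ Ω₂} |f(w) − f(z)| ≤ D. Then f admits the global modulus of continuity ω(δ) = (k₁ + k₂)δ + D: for every δ > 0 and all x, y ∈ Ω with ‖x − y‖ ≤ δ one has |f(x) − f(y)| ≤ (k₁ + k₂)δ + D. -/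
open Filter Topology

/-- Approximation lemma: if `z ∈ closure A`, `f` is Lipschitz on `A`, and the
limsup of `|f w - f z|` over `𝓝[A] z` is at most `D`, then for any `ε, η > 0`
there is `w ∈ A` with `‖w - z‖ < η` and `|f w - f z| < D + ε`. -/
lemma stmt_4_approx {d : ℕ} (A : Set (Fin d → ℝ)) (f : (Fin d → ℝ) → ℝ) (k : ℝ)
    (hk : 0 ≤ k)
    (hf : ∀ x ∈ A, ∀ y ∈ A, |f x - f y| ≤ k * ‖x - y‖)
    (z : Fin d → ℝ) (hz : z ∈ closure A) (D : ℝ)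
    (hj : Filter.limsup (fun w => |f w - f z|) (𝓝[A] z) ≤ D)
    (ε η : ℝ) (hε : 0 < ε) (hη : 0 < η) :
    ∃ w ∈ A, ‖w - z‖ < η ∧ |f w - f z| < D + ε := by
  have hne : (𝓝[A] z).NeBot := mem_closure_iff_nhdsWithin_neBot.mp hz
  obtain ⟨w₀, hw₀A, hw₀⟩ : ∃ w₀ ∈ A, dist z w₀ < 1 :=
    Metric.mem_closure_iff.mp hz 1 one_pos
  have h1 : ∀ᶠ w in 𝓝[A] z, w ∈ A := eventually_mem_nhdsWithin
  have h2 : ∀ᶠ w in 𝓝[A] z, dist w z < 1 := by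
    have : Metric.ball z 1 ∈ 𝓝[A] z :=
      nhdsWithin_le_nhds (Metric.ball_mem_nhds z one_pos)
    filter_upwards [this] with w hw using by simpa [Metric.mem_ball] using hw
  have hbdd : (𝓝[A] z).IsBoundedUnder (· ≤ ·) (fun w => |f w - f z|) := by
    refine ⟨k * 2 + |f w₀ - f z|, ?_⟩
    rw [Filter.eventually_map]
    filter_upwards [h1, h2] with w hwA hwd
    have hww₀ : ‖w - w₀‖ ≤ 2 := by
      have := dist_triangle w z w₀
      rw [← dist_eq_norm]
      linarith [dist_comm z w₀ ▸ hw₀]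
    have hlip := hf w hwA w₀ hw₀A
    have : |f w - f z| ≤ |f w - f w₀| + |f w₀ - f z| := by
      have := abs_add_le (f w - f w₀) (f w₀ - f z)
      simpa using this
    have hkm : k * ‖w - w₀‖ ≤ k * 2 := mul_le_mul_of_nonneg_left hww₀ hk
    linarith
  have hlt : Filter.limsup (fun w => |f w - f z|) (𝓝[A] z) < D + ε :=
    lt_of_le_of_lt hj (by linarith)
  have hev := Filter.eventually_lt_of_limsup_lt hlt hbdd
  have hball : ∀ᶠ w in 𝓝[A] z, dist w z < η := by
    have : Metric.ball z η ∈ 𝓝[A] z :=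
      nhdsWithin_le_nhds (Metric.ball_mem_nhds z hη)
    filter_upwards [this] with w hw using by simpa [Metric.mem_ball] using hw
  obtain ⟨w, hwA, hwd, hwf⟩ := (h1.and (hball.and hev)).exists
  exact ⟨w, hwA, by rwa [← dist_eq_norm], hwf⟩

/-- Key lemma: the mixed case, `x ∈ Ω₁`, `y ∈ Ω₂`. -/
lemma stmt_4_key
    (d : ℕ) (Ω Ω₁ Ω₂ : Set (Fin d → ℝ))
    (hconv : Convex ℝ Ω) (hunion : Ω = Ω₁ ∪ Ω₂) (hdisj : Ω₁ ∩ Ω₂ = ∅)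
    (f : (Fin d → ℝ) → ℝ)
    (k₁ k₂ : ℝ) (hk₁ : 0 ≤ k₁) (hk₂ : 0 ≤ k₂)
    (hf₁ : ∀ x ∈ Ω₁, ∀ y ∈ Ω₁, |f x - f y| ≤ k₁ * ‖x - y‖)
    (hf₂ : ∀ x ∈ Ω₂, ∀ y ∈ Ω₂, |f x - f y| ≤ k₂ * ‖x - y‖)
    (D : ℝ) (hD : 0 ≤ D)
    (hjump₁ : ∀ z ∈ Ω₂ ∩ closure Ω₁,
        Filter.limsup (fun w => |f w - f z|) (𝓝[Ω₁] z) ≤ D)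
    (hjump₂ : ∀ z ∈ Ω₁ ∩ closure Ω₂,
        Filter.limsup (fun w => |f w - f z|) (𝓝[Ω₂] z) ≤ D)
    (δ : ℝ) (hδ : 0 < δ) (x : Fin d → ℝ) (hx : x ∈ Ω₁)
    (y : Fin d → ℝ) (hy : y ∈ Ω₂) (hxy : ‖x - y‖ ≤ δ) :
    |f x - f y| ≤ (k₁ + k₂) * δ + D := by
  have hxΩ : x ∈ Ω := hunion ▸ Or.inl hx
  have hyΩ : y ∈ Ω := hunion ▸ Or.inr hy
  set γ : ℝ → (Fin d → ℝ) := fun t => x + t • (y - x) with hγ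
  have hγc : Continuous γ := by continuity
  have hγΩ : ∀ t ∈ Set.Icc (0:ℝ) 1, γ t ∈ Ω := by
    intro t ht
    have := hconv hxΩ hyΩ (by linarith [ht.2] : (0:ℝ) ≤ 1 - t) ht.1 (by ring)
    convert this using 1
    simp only [hγ]
    module
  set S : Set ℝ := {t | t ∈ Set.Icc (0:ℝ) 1 ∧ γ t ∈ Ω₁} with hS
  have hS0 : (0:ℝ) ∈ S := by
    constructor
    · exact ⟨le_refl 0, zero_le_one⟩
    · simpa [hγ] using hx
  have hSbdd : BddAbove S := ⟨1, fun t ht => ht.1.2⟩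
  set T : ℝ := sSup S with hT
  have hlub : IsLUB S T := isLUB_csSup ⟨0, hS0⟩ hSbdd
  have hT0 : 0 ≤ T := hlub.1 hS0
  have hT1 : T ≤ 1 := hlub.2 fun t ht => ht.1.2
  set z : Fin d → ℝ := γ T with hz
  have hzΩ : z ∈ Ω := hγΩ T ⟨hT0, hT1⟩
  have hzcl1 : z ∈ closure Ω₁ :=
    map_mem_closure hγc (hlub.mem_closure ⟨0, hS0⟩) fun t ht => ht.2
  have hxz : ‖x - z‖ ≤ δ := by
    have : x - z = (-T) • (y - x) := by simp only [hz, hγ]; module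
    rw [this, norm_smul]
    simp only [norm_neg, Real.norm_eq_abs, abs_of_nonneg hT0]
    calc T * ‖y - x‖ ≤ 1 * ‖y - x‖ := by
          have := norm_nonneg (y - x); nlinarith
      _ = ‖x - y‖ := by rw [one_mul, norm_sub_rev]
      _ ≤ δ := hxy
  have hzy : ‖z - y‖ ≤ δ := by
    have : z - y = (1 - T) • (x - y) := by simp only [hz, hγ]; module
    rw [this, norm_smul]
    simp only [Real.norm_eq_abs, abs_of_nonneg (by linarith : (0:ℝ) ≤ 1 - T)]
    calc (1 - T) * ‖x - y‖ ≤ 1 * ‖x - y‖ := by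
          have := norm_nonneg (x - y); nlinarith
      _ ≤ δ := by rw [one_mul]; exact hxy
  refine le_of_forall_pos_le_add fun ε hε => ?_
  set η : ℝ := (ε / 2) / (k₁ + k₂ + 1) with hηdef
  have hηpos : 0 < η := by positivity
  have hηb : (k₁ + k₂ + 1) * η = ε / 2 := by
    rw [hηdef]; field_simp
  rcases (hunion ▸ hzΩ : z ∈ Ω₁ ∪ Ω₂) with hz1 | hz2
  · -- z ∈ Ω₁ : segment crosses from the right, z ∈ closure Ω₂
    have hTne1 : T ≠ 1 := by
      intro h
      have : z = y := by simp only [hz, hγ, h]; module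
      have : y ∈ Ω₁ ∩ Ω₂ := ⟨this ▸ hz1, hy⟩
      simp [hdisj] at this
    have hTlt1 : T < 1 := lt_of_le_of_ne hT1 hTne1
    have hIoc : ∀ t ∈ Set.Ioc T 1, γ t ∈ Ω₂ := by
      intro t ht
      have htΩ : γ t ∈ Ω := hγΩ t ⟨le_trans hT0 ht.1.le, ht.2⟩
      rcases (hunion ▸ htΩ : γ t ∈ Ω₁ ∪ Ω₂) with h1 | h2
      · exact absurd (hlub.1 ⟨⟨le_trans hT0 ht.1.le, ht.2⟩, h1⟩) (not_le.mpr ht.1)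
      · exact h2
    have hzcl2 : z ∈ closure Ω₂ := by
      have htend : Tendsto γ (𝓝[>] T) (𝓝 z) :=
        (hγc.tendsto T).mono_left nhdsWithin_le_nhds
      have hev : ∀ᶠ t in 𝓝[>] T, γ t ∈ Ω₂ := by
        filter_upwards [Ioo_mem_nhdsGT_of_mem ⟨le_refl T, hTlt1⟩] with t ht
        exact hIoc t ⟨ht.1, ht.2.le⟩
      exact mem_closure_of_tendsto htend hev
    obtain ⟨w, hwA, hwd, hwf⟩ := stmt_4_approx Ω₂ f k₂ hk₂ hf₂ z hzcl2 D
      (hjump₂ z ⟨hz1, hzcl2⟩) (ε / 2) η (by linarith) hηpos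
    have e1 : |f x - f z| ≤ k₁ * ‖x - z‖ := hf₁ x hx z hz1
    have e2 : |f w - f y| ≤ k₂ * ‖w - y‖ := hf₂ w hwA y hy
    have e3 : ‖w - y‖ ≤ η + δ := by
      have := norm_add_le (w - z) (z - y)
      simp only [sub_add_sub_cancel] at this
      linarith
    have tri : |f x - f y| ≤ |f x - f z| + |f w - f z| + |f w - f y| := by
      have h := abs_add_le (f x - f z) (f z - f w)
      have h2 := abs_add_le ((f x - f z) + (f z - f w)) (f w - f y)
      have hc : |f z - f w| = |f w - f z| := abs_sub_comm _ _
      calc |f x - f y| = |((f x - f z) + (f z - f w)) + (f w - f y)| := by ring_nf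
        _ ≤ |(f x - f z) + (f z - f w)| + |f w - f y| := h2
        _ ≤ |f x - f z| + |f z - f w| + |f w - f y| := by linarith
        _ = |f x - f z| + |f w - f z| + |f w - f y| := by rw [hc]
    have m1 : k₁ * ‖x - z‖ ≤ k₁ * δ := mul_le_mul_of_nonneg_left hxz hk₁
    have m2 : k₂ * ‖w - y‖ ≤ k₂ * (η + δ) := mul_le_mul_of_nonneg_left e3 hk₂
    have hk2η : k₂ * η ≤ ε / 2 := by
      have := mul_le_mul_of_nonneg_right
        (show k₂ ≤ k₁ + k₂ + 1 by linarith) hηpos.le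
      linarith
    have hexp : k₂ * (η + δ) = k₂ * η + k₂ * δ := by ring
    linarith
  · -- z ∈ Ω₂ : z ∈ closure Ω₁, use jump₁
    obtain ⟨w, hwA, hwd, hwf⟩ := stmt_4_approx Ω₁ f k₁ hk₁ hf₁ z hzcl1 D
      (hjump₁ z ⟨hz2, hzcl1⟩) (ε / 2) η (by linarith) hηpos
    have e1 : |f x - f w| ≤ k₁ * ‖x - w‖ := hf₁ x hx w hwA
    have e2 : |f z - f y| ≤ k₂ * ‖z - y‖ := hf₂ z hz2 y hy
    have e3 : ‖x - w‖ ≤ δ + η := by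
      have := norm_add_le (x - z) (z - w)
      simp only [sub_add_sub_cancel] at this
      have : ‖x - w‖ ≤ ‖x - z‖ + ‖z - w‖ := this
      have hzw : ‖z - w‖ = ‖w - z‖ := norm_sub_rev z w
      linarith
    have tri : |f x - f y| ≤ |f x - f w| + |f w - f z| + |f z - f y| := by
      have h := abs_add_le (f x - f w) (f w - f z)
      have h2 := abs_add_le ((f x - f w) + (f w - f z)) (f z - f y)
      calc |f x - f y| = |((f x - f w) + (f w - f z)) + (f z - f y)| := by ring_nf
        _ ≤ |(f x - f w) + (f w - f z)| + |f z - f y| := h2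
        _ ≤ |f x - f w| + |f w - f z| + |f z - f y| := by linarith
    have m1 : k₁ * ‖x - w‖ ≤ k₁ * (δ + η) := mul_le_mul_of_nonneg_left e3 hk₁
    have m2 : k₂ * ‖z - y‖ ≤ k₂ * δ := mul_le_mul_of_nonneg_left hzy hk₂
    have hk1η : k₁ * η ≤ ε / 2 := by
      have := mul_le_mul_of_nonneg_right
        (show k₁ ≤ k₁ + k₂ + 1 by linarith) hηpos.le
      linarith
    have hexp : k₁ * (δ + η) = k₁ * δ + k₁ * η := by ring
    linarith

/-- A piecewise Lipschitz function on a convex domain `Ω = Ω₁ ∪ Ω₂`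
(disjoint union), `k₁`-Lipschitz on `Ω₁` and `k₂`-Lipschitz on `Ω₂`, whose
jump across the interface is bounded by `D ≥ 0` (in the limsup sense), admits
the global modulus of continuity `ω(δ) = (k₁ + k₂)δ + D`. -/
theorem stmt_4
    (d : ℕ) (Ω Ω₁ Ω₂ : Set (Fin d → ℝ))
    (hconv : Convex ℝ Ω) (hunion : Ω = Ω₁ ∪ Ω₂) (hdisj : Ω₁ ∩ Ω₂ = ∅)
    (f : (Fin d → ℝ) → ℝ)
    (k₁ k₂ : ℝ) (hk₁ : 0 ≤ k₁) (hk₂ : 0 ≤ k₂)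
    (hf₁ : ∀ x ∈ Ω₁, ∀ y ∈ Ω₁, |f x - f y| ≤ k₁ * ‖x - y‖)
    (hf₂ : ∀ x ∈ Ω₂, ∀ y ∈ Ω₂, |f x - f y| ≤ k₂ * ‖x - y‖)
    (D : ℝ) (hD : 0 ≤ D)
    (hjump₁ : ∀ z ∈ Ω₂ ∩ closure Ω₁,
        Filter.limsup (fun w => |f w - f z|) (𝓝[Ω₁] z) ≤ D)
    (hjump₂ : ∀ z ∈ Ω₁ ∩ closure Ω₂,
        Filter.limsup (fun w => |f w - f z|) (𝓝[Ω₂] z) ≤ D) :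
    ∀ δ > (0 : ℝ), ∀ x ∈ Ω, ∀ y ∈ Ω, ‖x - y‖ ≤ δ →
      |f x - f y| ≤ (k₁ + k₂) * δ + D := by
  intro δ hδ x hx y hy hxy
  rcases (hunion ▸ hx : x ∈ Ω₁ ∪ Ω₂) with hx1 | hx2 <;>
  rcases (hunion ▸ hy : y ∈ Ω₁ ∪ Ω₂) with hy1 | hy2
  · have := hf₁ x hx1 y hy1
    nlinarith
  · exact stmt_4_key d Ω Ω₁ Ω₂ hconv hunion hdisj f k₁ k₂ hk₁ hk₂ hf₁ hf₂ D hD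
      hjump₁ hjump₂ δ hδ x hx1 y hy2 hxy
  · have := stmt_4_key d Ω Ω₂ Ω₁ hconv (by rw [hunion, Set.union_comm])
      (by rw [Set.inter_comm]; exact hdisj) f k₂ k₁ hk₂ hk₁ hf₂ hf₁ D hD
      hjump₂ hjump₁ δ hδ x hx2 y hy1 hxy
    linarith
  · have := hf₂ x hx2 y hy2
    nlinarith
end

section
/- Let Ω ⊆ ℝ³ and let f : Ω → ℝ be bounded and admit at a point x ∈ Ω the local modulus of continuity ω_x(δ) = K·δ + D (with constants K ≥ 0 and D ≥ 0) with respect to ‖·‖_∞. Suppose that for each n ∈ ℕ one is given a finite index set I_n, nodes x_i^{(n)} ∈ Ω (i ∈ I_n), and basis functions B_i^{(n)} : ℝ³ → ℝ that are nonnegative, normalized on Ω, and have compact support parameter α_n > 0 with respect to ‖·‖_∞, and suppose α_n → 0 as n → ∞. Then limsup_{n → ∞} |P_n f(x) − f(x)| ≤ D. -/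
open Filter

/-!
The interpolant at `x` is a convex combination of the nodal values `f (xₙ i)`, and only nodes
within `αₙ` of `x` carry weight. The modulus of continuity bounds each of their deviations from
`f x` by `K αₙ + D`, hence so is the interpolation error, and `K αₙ + D → D`.
-/

section Interpolation

variable {ι E : Type*} [Fintype ι]

theorem abs_sum_mul_sub_le_of_weights {v w : ι → ℝ} {c M : ℝ} (hw : ∀ i, 0 ≤ w i)
    (hw_sum : ∑ i, w i = 1) (hv : ∀ i, w i ≠ 0 → |v i - c| ≤ M) :
    |∑ i, v i * w i - c| ≤ M := by
  have hdev : ∑ i, v i * w i - c = ∑ i, (v i - c) * w i := by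
    simp only [sub_mul, Finset.sum_sub_distrib, ← Finset.mul_sum, hw_sum, mul_one]
  have hterm : ∀ i, |(v i - c) * w i| ≤ M * w i := fun i => by
    rw [abs_mul, abs_of_nonneg (hw i)]
    by_cases hwi : w i = 0
    · simp [hwi]
    · exact mul_le_mul_of_nonneg_right (hv i hwi) (hw i)
  calc |∑ i, v i * w i - c|
      ≤ ∑ i, |(v i - c) * w i| := hdev ▸ Finset.abs_sum_le_sum_abs _ _
    _ ≤ ∑ i, M * w i := Finset.sum_le_sum fun i _ => hterm i
    _ = M := by rw [← Finset.mul_sum, hw_sum, mul_one]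

theorem abs_interpolant_sub_le [SeminormedAddCommGroup E] {f : E → ℝ} {x : E} {xs : ι → E}
    {B : ι → E → ℝ} {α M : ℝ} (hB_nonneg : ∀ i, 0 ≤ B i x) (hB_sum : ∑ i, B i x = 1)
    (hB_supp : ∀ i, α ≤ ‖x - xs i‖ → B i x = 0) (hf : ∀ i, ‖xs i - x‖ < α → |f (xs i) - f x| ≤ M) :
    |∑ i, f (xs i) * B i x - f x| ≤ M :=
  abs_sum_mul_sub_le_of_weights hB_nonneg hB_sum fun i hBi =>
    hf i (norm_sub_rev x (xs i) ▸ not_le.1 (mt (hB_supp i) hBi))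

end Interpolation

theorem stmt_10_general
    (Ω : Set (Fin 3 → ℝ)) (f : (Fin 3 → ℝ) → ℝ)
    (x : Fin 3 → ℝ) (hx : x ∈ Ω)
    (K D : ℝ)
    (hmod : ∀ δ > (0 : ℝ), ∀ y ∈ Ω, ‖y - x‖ ≤ δ → |f y - f x| ≤ K * δ + D)
    (I : ℕ → Type) [∀ n, Fintype (I n)]
    (xn : (n : ℕ) → I n → (Fin 3 → ℝ)) (hxn : ∀ n i, xn n i ∈ Ω)
    (B : (n : ℕ) → I n → (Fin 3 → ℝ) → ℝ)
    (hBnonneg : ∀ (n : ℕ) (i : I n) (y : Fin 3 → ℝ), 0 ≤ B n i y)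
    (hBnorm : ∀ n : ℕ, ∀ y ∈ Ω, ∑ i, B n i y = 1)
    (α : ℕ → ℝ) (hα : ∀ n, 0 < α n)
    (hBsupp : ∀ (n : ℕ) (i : I n) (y : Fin 3 → ℝ),
      α n ≤ ‖y - xn n i‖ → B n i y = 0)
    (hαlim : Tendsto α atTop (nhds 0)) :
    Filter.limsup (fun n => |(∑ i, f (xn n i) * B n i x) - f x|) atTop ≤ D := by
  have herr : ∀ n, |(∑ i, f (xn n i) * B n i x) - f x| ≤ K * α n + D := fun n =>
    abs_interpolant_sub_le (fun i => hBnonneg n i x) (hBnorm n x hx) (fun i => hBsupp n i x)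
      fun i hi => hmod (α n) (hα n) (xn n i) (hxn n i) hi.le
  have hbound : Tendsto (fun n => K * α n + D) atTop (nhds D) := by
    simpa using (hαlim.const_mul K).add_const D
  calc Filter.limsup (fun n => |(∑ i, f (xn n i) * B n i x) - f x|) atTop
      ≤ Filter.limsup (fun n => K * α n + D) atTop :=
        limsup_le_limsup (Eventually.of_forall herr)
          (isCoboundedUnder_le_of_le atTop fun _ => abs_nonneg _) hbound.isBoundedUnder_le
    _ = D := hbound.limsup_eq

/-- Gibbs-effect plateau: at a point where the bounded function `f` admits the
local modulus of continuity `ω(δ) = K·δ + D`, interpolants built from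
nonnegative, normalized bases with compact support parameters `α_n → 0`
satisfy `limsup_n |P_n f(x) − f(x)| ≤ D`. -/
theorem stmt_10
    (Ω : Set (Fin 3 → ℝ)) (f : (Fin 3 → ℝ) → ℝ)
    (hfbdd : ∃ C : ℝ, ∀ y ∈ Ω, |f y| ≤ C)
    (x : Fin 3 → ℝ) (hx : x ∈ Ω)
    (K D : ℝ) (hK : 0 ≤ K) (hD : 0 ≤ D)
    (hmod : ∀ δ > (0 : ℝ), ∀ y ∈ Ω, ‖y - x‖ ≤ δ → |f y - f x| ≤ K * δ + D)
    (I : ℕ → Type) [∀ n, Fintype (I n)]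
    (xn : (n : ℕ) → I n → (Fin 3 → ℝ)) (hxn : ∀ n i, xn n i ∈ Ω)
    (B : (n : ℕ) → I n → (Fin 3 → ℝ) → ℝ)
    (hBnonneg : ∀ (n : ℕ) (i : I n) (y : Fin 3 → ℝ), 0 ≤ B n i y)
    (hBnorm : ∀ n : ℕ, ∀ y ∈ Ω, ∑ i, B n i y = 1)
    (α : ℕ → ℝ) (hα : ∀ n, 0 < α n)
    (hBsupp : ∀ (n : ℕ) (i : I n) (y : Fin 3 → ℝ),
      α n ≤ ‖y - xn n i‖ → B n i y = 0)
    (hαlim : Tendsto α atTop (nhds 0)) :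
    Filter.limsup (fun n => |(∑ i, f (xn n i) * B n i x) - f x|) atTop ≤ D :=
  stmt_10_general Ω f x hx K D hmod I xn hxn B hBnonneg hBnorm α hα hBsupp hαlim
end
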